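/- arXiv:2202.06411 — 6 statements merged into one kernel-verified Lean document; each statement's English description precedes it below -/
import Mathlib

section
/- Let Π* ⊆ ℝ^q be a bounded set, and let Cone_B (for B ∈ [0,∞]) be as in the PMV-instability setting. If Π* ⊆ Cone_∞, then there exists a finite B* ≥ 0 with Π* ⊆ Cone_{B*}; consequently B⁻_{Π*} := inf{B ≥ 0 : Π* ⊆ Cone_B} is finite. -/
/-!
Write `b = -AT x`. Membership of `x` in `Cone_∞` says that the system `AT (oᵀM) ≤ b` has a
solution `o ≥ 0`; with slack variables, `b` is a nonnegative combination of finitely many fixed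
vectors. By the conic Carathéodory theorem it is then a nonnegative combination of a linearly
independent subfamily, whose coefficients depend linearly, hence boundedly, on `b`. As there are
only finitely many subfamilies, some `o ≥ 0` has `‖o‖ ≤ K ‖b‖` with `K` independent of `b`, so on
the bounded set `Π*` the cost `c ⬝ᵥ o` stays bounded.
-/

open Matrix

/-- `Cone_B` of the PMV-instability setting. -/
def coneB {q k mS mT : ℕ} (AS : Matrix (Fin mS) (Fin q) ℝ) (AT : Matrix (Fin mT) (Fin q) ℝ)
    (M : Matrix (Fin k) (Fin q) ℝ) (c : Fin k → ℝ) (B : ℝ) : Set (Fin q → ℝ) :=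
  {x | AS.mulVec x ≤ 0 ∧
    ∃ o : Fin k → ℝ, (∀ i, 0 ≤ o i) ∧ c ⬝ᵥ o ≤ B ∧ AT.mulVec (x + Matrix.vecMul o M) ≤ 0}

/-- `Cone_∞` of the PMV-instability setting (no budget constraint). -/
def coneInfty {q k mS mT : ℕ} (AS : Matrix (Fin mS) (Fin q) ℝ) (AT : Matrix (Fin mT) (Fin q) ℝ)
    (M : Matrix (Fin k) (Fin q) ℝ) : Set (Fin q → ℝ) :=
  {x | AS.mulVec x ≤ 0 ∧
    ∃ o : Fin k → ℝ, (∀ i, 0 ≤ o i) ∧ AT.mulVec (x + Matrix.vecMul o M) ≤ 0}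

section Caratheodory

variable {𝕜 E ι : Type*} [Field 𝕜] [LinearOrder 𝕜] [IsStrictOrderedRing 𝕜]
  [AddCommGroup E] [Module 𝕜 E] [Finite ι]

theorem exists_sub_smul_nonneg_support_ssubset {ν g : ι → 𝕜} (hν : 0 ≤ ν)
    (hg : ∀ i, ν i = 0 → g i = 0) {j : ι} (hj : 0 < g j) :
    ∃ θ : 𝕜, 0 ≤ ν - θ • g ∧ Function.support (ν - θ • g) ⊂ Function.support ν := by
  obtain ⟨i₀, hi₀ : 0 < g i₀, hmin⟩ :=
    Set.exists_min_image {i | 0 < g i} (fun i => ν i / g i) (Set.toFinite _) ⟨j, hj⟩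
  refine ⟨ν i₀ / g i₀, fun i => ?_, ?_⟩
  · simp only [Pi.zero_apply, Pi.sub_apply, Pi.smul_apply, smul_eq_mul, sub_nonneg]
    rcases lt_or_ge 0 (g i) with hi | hi
    · simpa [le_div_iff₀ hi] using hmin i hi
    · exact (mul_nonpos_of_nonneg_of_nonpos (div_nonneg (hν i₀) hi₀.le) hi).trans (hν i)
  · refine Set.ssubset_iff_of_subset (fun i h hνi => ?_) |>.mpr ⟨i₀, ?_, ?_⟩
    · simp [hνi, hg i hνi] at h
    · simpa using mt (hg i₀) hi₀.ne'
    · simp [div_mul_cancel₀ _ hi₀.ne']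

/-- Conic Carathéodory theorem: `F` is injective on the vectors supported in `support ν`. -/
theorem exists_nonneg_preimage_disjoint_ker (F : (ι → 𝕜) →ₗ[𝕜] E) {μ : ι → 𝕜} (hμ : 0 ≤ μ) :
    ∃ ν, 0 ≤ ν ∧ F ν = F μ ∧
      Disjoint (LinearMap.ker F) (Submodule.pi (Function.support ν)ᶜ fun _ => ⊥) := by
  obtain ⟨ν, ⟨hν, hFν⟩, hmin⟩ := (measure fun ν : ι → 𝕜 => (Function.support ν).ncard).wf.has_min
    {ν | 0 ≤ ν ∧ F ν = F μ} ⟨μ, hμ, rfl⟩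
  refine ⟨ν, hν, hFν, Submodule.disjoint_def.mpr fun g hFg hgν => ?_⟩
  simp only [Submodule.mem_pi, Set.mem_compl_iff, Function.mem_support, not_not,
    Submodule.mem_bot] at hgν
  by_contra hg0
  obtain ⟨j, hj⟩ := Function.ne_iff.mp hg0
  have descend : ∀ g' : ι → 𝕜, F g' = 0 → (∀ i, ν i = 0 → g' i = 0) → ¬ 0 < g' j := by
    intro g' hFg' hg'ν hj'
    obtain ⟨θ, hθ, hlt⟩ := exists_sub_smul_nonneg_support_ssubset hν hg'ν hj'
    exact hmin _ ⟨hθ, by simp [hFg', hFν]⟩ (Set.ncard_lt_ncard hlt (Set.toFinite _))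
  rcases (hj : g j ≠ 0).lt_or_gt with hneg | hpos
  · exact descend (-g) (by simpa using hFg) (by simpa using hgν) (by simpa using hneg)
  · exact descend g hFg hgν hpos

end Caratheodory

theorem LinearMap.exists_norm_le_mul_norm_of_disjoint_ker {𝕜 V E : Type*}
    [NontriviallyNormedField 𝕜] [CompleteSpace 𝕜] [NormedAddCommGroup V] [NormedSpace 𝕜 V]
    [FiniteDimensional 𝕜 V] [NormedAddCommGroup E] [NormedSpace 𝕜 E] (F : V →ₗ[𝕜] E)
    {W : Submodule 𝕜 V} (hW : Disjoint (LinearMap.ker F) W) : ∃ K : ℝ, 0 ≤ K ∧ ∀ w ∈ W, ‖w‖ ≤ K * ‖F w‖ := by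
  obtain ⟨K, -, hK⟩ := (F ∘ₗ W.subtype).exists_antilipschitzWith <| by
    rwa [LinearMap.ker_comp, ← Submodule.disjoint_iff_comap_eq_bot, disjoint_comm]
  exact ⟨K, K.2, fun w hw => ZeroHomClass.bound_of_antilipschitz _ hK ⟨w, hw⟩⟩

theorem LinearMap.exists_nonneg_preimage_norm_le {E ι : Type*} [NormedAddCommGroup E]
    [NormedSpace ℝ E] [Fintype ι] (F : (ι → ℝ) →ₗ[ℝ] E) :
    ∃ K : ℝ, 0 ≤ K ∧ ∀ μ, 0 ≤ μ → ∃ ν, 0 ≤ ν ∧ F ν = F μ ∧ ‖ν‖ ≤ K * ‖F μ‖ := by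
  have hbound (s : Set ι) : ∃ K : ℝ, 0 ≤ K ∧ ∀ ν : ι → ℝ, Function.support ν = s →
      Disjoint (LinearMap.ker F) (Submodule.pi (Function.support ν)ᶜ fun _ => ⊥) →
        ‖ν‖ ≤ K * ‖F ν‖ := by
    by_cases hs : Disjoint (LinearMap.ker F) (Submodule.pi sᶜ fun _ => ⊥)
    · obtain ⟨K, hK0, hK⟩ := F.exists_norm_le_mul_norm_of_disjoint_ker hs
      exact ⟨K, hK0, fun ν hν _ => hK ν (by simp [← hν, Submodule.mem_pi])⟩
    · exact ⟨0, le_rfl, fun ν hν h => absurd (hν ▸ h) hs⟩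
  choose K hK0 hK using hbound
  obtain ⟨K₀, hK₀⟩ := Finite.exists_le K
  refine ⟨K₀, (hK0 ∅).trans (hK₀ ∅), fun μ hμ => ?_⟩
  obtain ⟨ν, hν, hFν, hdisj⟩ := exists_nonneg_preimage_disjoint_ker F hμ
  refine ⟨ν, hν, hFν, ?_⟩
  calc ‖ν‖ ≤ K (Function.support ν) * ‖F ν‖ := hK _ ν rfl hdisj
    _ ≤ K₀ * ‖F μ‖ := by rw [hFν]; gcongr; exact hK₀ _

theorem LinearMap.exists_nonneg_le_norm_le {κ m : Type*} [Fintype κ] [Fintype m]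
    (L : (κ → ℝ) →ₗ[ℝ] (m → ℝ)) :
    ∃ K : ℝ, 0 ≤ K ∧ ∀ (b : m → ℝ) (o : κ → ℝ), 0 ≤ o → L o ≤ b →
      ∃ o', 0 ≤ o' ∧ L o' ≤ b ∧ ‖o'‖ ≤ K * ‖b‖ := by
  -- slack variables turn `L o ≤ b` into the equation `L o + s = b` with `s ≥ 0`
  let F : (κ ⊕ m → ℝ) →ₗ[ℝ] (m → ℝ) :=
    L ∘ₗ LinearMap.funLeft ℝ ℝ Sum.inl + LinearMap.funLeft ℝ ℝ Sum.inr
  have hF (ν : κ ⊕ m → ℝ) : F ν = L (ν ∘ Sum.inl) + ν ∘ Sum.inr := rfl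
  obtain ⟨K, hK0, hK⟩ := F.exists_nonneg_preimage_norm_le
  refine ⟨K, hK0, fun b o ho hLo => ?_⟩
  have hFb : F (Sum.elim o (b - L o)) = b := by simp [hF]
  have hslack : 0 ≤ Sum.elim o (b - L o) := Sum.forall.mpr ⟨ho, sub_nonneg.mpr hLo⟩
  obtain ⟨ν, hν, hFν, hνb⟩ := hK _ hslack
  rw [hFb, hF] at hFν
  refine ⟨ν ∘ Sum.inl, fun i => hν _, ?_, ?_⟩
  · rw [← hFν]
    exact le_add_of_nonneg_right fun i => hν _
  · refine le_trans ((pi_norm_le_iff_of_nonneg (norm_nonneg ν)).mpr fun i => ?_) (hFb ▸ hνb)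
    exact norm_le_pi_norm ν _

theorem stmt6_general {q k mS mT : ℕ}
    (AS : Matrix (Fin mS) (Fin q) ℝ) (AT : Matrix (Fin mT) (Fin q) ℝ)
    (M : Matrix (Fin k) (Fin q) ℝ)
    (c : Fin k → ℝ)
    (Ps : Set (Fin q → ℝ)) (hbdd : Bornology.IsBounded Ps)
    (hsub : Ps ⊆ coneInfty AS AT M) :
    ∃ B : ℝ, 0 ≤ B ∧ Ps ⊆ coneB AS AT M c B := by
  obtain ⟨R, hR0, hR⟩ := hbdd.exists_pos_norm_le
  obtain ⟨K, hK0, hK⟩ := (toLin' AT ∘ₗ M.vecMulLinear).exists_nonneg_le_norm_le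
  set A := LinearMap.toContinuousLinearMap (toLin' AT)
  set f := LinearMap.toContinuousLinearMap (dotProductBilin ℝ ℝ c)
  refine ⟨‖f‖ * (K * (‖A‖ * R)), by positivity, fun x hx => ?_⟩
  obtain ⟨hxS, o, ho, hxT⟩ := hsub hx
  rw [mulVec_add, ← le_neg_iff_add_nonpos_left] at hxT
  obtain ⟨o', ho', hT', hbound⟩ := hK (-(AT *ᵥ x)) o (Pi.le_def.mpr ho) hxT
  refine ⟨hxS, o', ho', ?_, ?_⟩
  · calc c ⬝ᵥ o' ≤ ‖f o'‖ := Real.le_norm_self _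
      _ ≤ ‖f‖ * ‖o'‖ := f.le_opNorm o'
      _ ≤ ‖f‖ * (K * (‖A‖ * R)) := by
        gcongr
        calc ‖o'‖ ≤ K * ‖-(AT *ᵥ x)‖ := hbound
          _ ≤ K * (‖A‖ * R) := by
            rw [norm_neg]
            gcongr
            exact (A.le_opNorm x).trans (by gcongr; exact hR x hx)
  · rwa [mulVec_add, ← le_neg_iff_add_nonpos_left]

/-- If a bounded set `Π*` is contained in `Cone_∞`, then it is contained in `Cone_{B*}`
for some finite budget `B* ≥ 0`; consequently `B⁻_{Π*} = inf{B ≥ 0 : Π* ⊆ Cone_B}` is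
finite. -/
theorem stmt6 {q k mS mT : ℕ}
    (AS : Matrix (Fin mS) (Fin q) ℝ) (AT : Matrix (Fin mT) (Fin q) ℝ)
    (M : Matrix (Fin k) (Fin q) ℝ)
    (c : Fin k → ℝ) (hc : ∀ i, 0 < c i)
    (Ps : Set (Fin q → ℝ)) (hbdd : Bornology.IsBounded Ps)
    (hsub : Ps ⊆ coneInfty AS AT M) :
    ∃ B : ℝ, 0 ≤ B ∧ Ps ⊆ coneB AS AT M c B :=
  stmt6_general AS AT M c Ps hbdd hsub
end

section
/- Let P₀ ⊆ ℝ^q be a linear subspace, and let p₁, …, p_k ∈ ℝ^q be vectors such that {p₁, …, p_k} together with P₀ are linearly independent (i.e., no nonzero linear combination of p₁,…,p_k lies in P₀). Let L = {Σᵢ ηᵢ pᵢ : ηᵢ ∈ ℤ, not all zero}. Then inf{‖x − y‖_∞ : x ∈ L, y ∈ P₀} > 0. -/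
/-! If no nonzero real combination of the `pᵢ` lies in the closed subspace `P`, the map
`η ↦ [∑ ηᵢ pᵢ]` into `E ⧸ P` is injective on the finite-dimensional space `ι → ℝ`, hence
antilipschitz: `‖η‖ ≤ K ‖[∑ ηᵢ pᵢ]‖ ≤ K ‖∑ ηᵢ pᵢ - y‖` for every `y ∈ P`. A nonzero integer vector
has sup norm at least `1`, so `1 / K` is a uniform lower bound. -/

open Submodule

theorem exists_norm_le_mul_norm_sum_smul_sub {ι E : Type*} [Fintype ι] [NormedAddCommGroup E]
    [NormedSpace ℝ E] (P : Submodule ℝ E) [IsClosed (P : Set E)] (p : ι → E)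
    (hind : ∀ η : ι → ℝ, (∑ i, η i • p i) ∈ P → η = 0) :
    ∃ K : ℝ, 0 < K ∧ ∀ η : ι → ℝ, ∀ y ∈ P, ‖η‖ ≤ K * ‖(∑ i, η i • p i) - y‖ := by
  let T := P.mkQ ∘ₗ Fintype.linearCombination ℝ p
  have hT : ∀ η, T η = P.mkQ (∑ i, η i • p i) := fun η => by
    simp [T, Fintype.linearCombination_apply]
  have hker : LinearMap.ker T = ⊥ := LinearMap.ker_eq_bot'.2 fun η hη =>
    hind η <| (Quotient.mk_eq_zero P).1 <| (hT η).symm.trans hη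
  obtain ⟨K, hK, hanti⟩ := T.exists_antilipschitzWith hker
  refine ⟨K, hK, fun η y hy => ?_⟩
  have hTη : T η = P.mkQ ((∑ i, η i • p i) - y) := by
    rw [hT, map_sub, P.mkQ_apply y, (Quotient.mk_eq_zero P).2 hy, sub_zero]
  calc ‖η‖ ≤ K * ‖T η‖ := ZeroHomClass.bound_of_antilipschitz T hanti η
    _ ≤ K * ‖(∑ i, η i • p i) - y‖ := by
      rw [hTη]
      exact mul_le_mul_of_nonneg_left (Quotient.norm_mk_le _ _) K.2

theorem one_le_norm_intCast_of_ne_zero {ι : Type*} [Fintype ι] {η : ι → ℤ} (hη : η ≠ 0) :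
    1 ≤ ‖fun i => (η i : ℝ)‖ := by
  obtain ⟨i, hi⟩ := Function.ne_iff.1 hη
  calc (1 : ℝ) ≤ |(η i : ℝ)| := by exact_mod_cast Int.one_le_abs hi
    _ ≤ ‖fun i => (η i : ℝ)‖ := norm_le_pi_norm (fun i => (η i : ℝ)) i

/-- Let `P₀ ⊆ ℝ^q` be a linear subspace and `p₁, …, p_k` vectors linearly independent
from `P₀` (no nonzero real combination lies in `P₀`). Then the nonzero integer
combinations of the `pᵢ` are bounded away from `P₀` in sup norm:
`inf{‖x − y‖_∞ : x ∈ L, y ∈ P₀} > 0` where `L` is the lattice generated by the `pᵢ`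
excluding `0`. -/
theorem stmt8 {q k : ℕ} (P₀ : Submodule ℝ (Fin q → ℝ)) (p : Fin k → (Fin q → ℝ))
    (hind : ∀ η : Fin k → ℝ, (∑ i, η i • p i) ∈ P₀ → η = 0) :
    ∃ C : ℝ, 0 < C ∧ ∀ η : Fin k → ℤ, η ≠ 0 → ∀ y ∈ P₀,
      C ≤ ‖(∑ i, (η i : ℝ) • p i) - y‖ := by
  have : IsClosed (P₀ : Set (Fin q → ℝ)) := P₀.closed_of_finiteDimensional
  obtain ⟨K, hK, hbound⟩ := exists_norm_le_mul_norm_sum_smul_sub P₀ p hind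
  refine ⟨K⁻¹, inv_pos.2 hK, fun η hη y hy => ?_⟩
  rw [inv_le_iff_one_le_mul₀' hK]
  exact (one_le_norm_intCast_of_ne_zero hη).trans (hbound _ y hy)
end

section
/- Consider the PMV-instability setting with polyhedra H_S = {x : A_S x ≤ b_S}, H_T = {x : A_T x ≤ b_T}, finite operation set O with matrix M_O, and cost vector c > 0. There exists a constant C (depending only on the matrices A_S, A_T, M_O, b_S, b_T, c, not on B) such that for every B ≥ 0 and every x ∈ H_B := {x ∈ H_S : ∃ o ≥ 0, c·o ≤ B, x + oᵀM_O ∈ H_T}, there exists x′ in the projection to x′ of the set of feasible solutions of the homogeneous system {A_S x′ ≤ 0, A_T(x′ + o′ᵀM_O) ≤ 0, o′ ≥ 0, c·o′ ≤ 0} (equivalently, since c > 0 forces o′ = 0, x′ ∈ {x : A_S x ≤ 0} ∩ {x : A_T x ≤ 0}) with ‖x − x′‖_∞ ≤ C(B+1). -/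
open Matrix Finset Filter

open scoped InnerProductSpace

variable {m q : ℕ}

local notation "E" => EuclideanSpace ℝ (Fin q)


/-- Conic Carathéodory: any conic combination can be rewritten with linearly
independent support. -/
lemma conic_carath (a : Fin m → E) :
    ∀ (n : ℕ) (l : Fin m → ℝ), (∀ i, 0 ≤ l i) →
      (Finset.univ.filter fun i => l i ≠ 0).card ≤ n →
      ∃ g : Fin m → ℝ, (∀ i, 0 ≤ g i) ∧ (∑ i, g i • a i = ∑ i, l i • a i) ∧
        LinearIndependent ℝ (fun i : ↥(Finset.univ.filter fun i => g i ≠ 0) => a i) := by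
  intro n
  induction n with
  | zero =>
      intro l hl hcard
      refine ⟨l, hl, rfl, ?_⟩
      have : (Finset.univ.filter fun i => l i ≠ 0) = ∅ :=
        Finset.card_eq_zero.mp (le_antisymm hcard (Nat.zero_le _))
      rw [this]
      have : IsEmpty ↥(∅ : Finset (Fin m)) := ⟨fun x => Finset.notMem_empty _ x.2⟩
      exact linearIndependent_empty_type
  | succ n ih =>
      intro l hl hcard
      set s := Finset.univ.filter fun i => l i ≠ 0 with hs
      by_cases hind : LinearIndependent ℝ (fun i : ↥s => a i)
      · exact ⟨l, hl, rfl, hind⟩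
      -- get a nontrivial vanishing combination supported on s with a positive coordinate
      obtain ⟨g0, hg0sum, i0, hi0⟩ := Fintype.not_linearIndependent_iff.mp hind
      have key : ∃ γ : Fin m → ℝ, (∀ i, γ i ≠ 0 → i ∈ s) ∧ (∑ i, γ i • a i = 0) ∧
          ∃ j, 0 < γ j := by
        set γ0 : Fin m → ℝ := fun i => if h : i ∈ s then g0 ⟨i, h⟩ else 0 with hγ0
        have hsupp : ∀ i, γ0 i ≠ 0 → i ∈ s := by
          intro i hi
          by_contra h
          simp [hγ0, h] at hi
        have hsum : ∑ i, γ0 i • a i = 0 := by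
          have h1 : ∑ i ∈ s, γ0 i • a i = ∑ i, γ0 i • a i := by
            refine Finset.sum_subset (Finset.subset_univ s) ?_
            intro x _ hx
            simp [hγ0, hx]
          have h2 : ∑ i ∈ s, γ0 i • a i = ∑ i : ↥s, g0 i • a i := by
            rw [← Finset.sum_coe_sort s (fun i => γ0 i • a i)]
            refine Finset.sum_congr rfl ?_
            intro i _
            simp [hγ0, i.2]
          rw [← h1, h2, hg0sum]
        rcases lt_trichotomy (γ0 i0) 0 with hneg | hzero | hpos
        · refine ⟨-γ0, ?_, ?_, ⟨i0, by simpa using hneg⟩⟩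
          · intro i hi; exact hsupp i (by simpa using hi)
          · simp [neg_smul, Finset.sum_neg_distrib, hsum]
        · exfalso; apply hi0; simpa [hγ0, i0.2] using hzero
        · exact ⟨γ0, hsupp, hsum, ⟨i0, hpos⟩⟩
      obtain ⟨γ, hγsupp, hγsum, j, hj⟩ := key
      set sp := s.filter (fun i => 0 < γ i) with hsp
      have hspne : sp.Nonempty := ⟨j, by simp [hsp, hγsupp j (ne_of_gt hj), hj]⟩
      obtain ⟨i1, hi1mem, hi1min⟩ := Finset.exists_min_image sp (fun i => l i / γ i) hspne
      have hi1s : i1 ∈ s := (Finset.mem_filter.mp hi1mem).1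
      have hi1pos : 0 < γ i1 := (Finset.mem_filter.mp hi1mem).2
      set t := l i1 / γ i1 with ht
      have ht0 : 0 ≤ t := div_nonneg (hl i1) hi1pos.le
      set l' : Fin m → ℝ := fun i => l i - t * γ i with hl'def
      have hl' : ∀ i, 0 ≤ l' i := by
        intro i
        rcases le_or_gt (γ i) 0 with h | h
        · have : t * γ i ≤ 0 := mul_nonpos_of_nonneg_of_nonpos ht0 h
          simp only [hl'def]; linarith [hl i]
        · have hi : i ∈ sp := Finset.mem_filter.mpr ⟨hγsupp i (ne_of_gt h), h⟩
          have := hi1min i hi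
          have : t * γ i ≤ l i := (le_div_iff₀ h).mp this
          simp only [hl'def]; linarith
      have hsum' : ∑ i, l' i • a i = ∑ i, l i • a i := by
        simp only [hl'def, sub_smul, Finset.sum_sub_distrib]
        have : ∑ i, (t * γ i) • a i = t • ∑ i, γ i • a i := by
          rw [Finset.smul_sum]; exact Finset.sum_congr rfl fun i _ => (smul_smul t (γ i) (a i)).symm
        rw [this, hγsum, smul_zero, sub_zero]
      have hsubset : (Finset.univ.filter fun i => l' i ≠ 0) ⊆ s.erase i1 := by
        intro i hi
        have hne : l' i ≠ 0 := (Finset.mem_filter.mp hi).2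
        refine Finset.mem_erase.mpr ⟨?_, ?_⟩
        · rintro rfl
          apply hne
          simp only [hl'def, ht]
          field_simp
          ring
        · by_contra h
          have hl0 : l i = 0 := by
            by_contra h'
            exact h (Finset.mem_filter.mpr ⟨Finset.mem_univ i, h'⟩)
          have hγ0 : γ i = 0 := by
            by_contra h'
            exact h (hγsupp i h')
          apply hne; simp [hl'def, hl0, hγ0]
      have hcard' : (Finset.univ.filter fun i => l' i ≠ 0).card ≤ n := by
        have h1 := Finset.card_le_card hsubset
        have h2 : (s.erase i1).card = s.card - 1 := Finset.card_erase_of_mem hi1s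
        omega
      obtain ⟨g, hg0, hgsum, hgind⟩ := ih l' hl' hcard'
      exact ⟨g, hg0, by rw [hgsum, hsum'], hgind⟩

lemma indep_bound (a : Fin m → E) (s : Finset (Fin m))
    (hs : LinearIndependent ℝ fun i : ↥s => a i) :
    ∃ c : ℝ, ∀ l : Fin m → ℝ, (∀ i, 0 ≤ l i) → (∀ i, l i ≠ 0 → i ∈ s) →
      ∑ i, l i ≤ c * ‖∑ i, l i • a i‖ := by
  set T : (↥s → ℝ) →ₗ[ℝ] E :=
    { toFun := fun g => ∑ i, g i • a i
      map_add' := by intro g h; simp [add_smul, Finset.sum_add_distrib]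
      map_smul' := by intro r g; simp [Finset.smul_sum, smul_smul] } with hT
  have hinj : Function.Injective T := by
    rw [← LinearMap.ker_eq_bot, LinearMap.ker_eq_bot']
    intro g hg
    have := Fintype.linearIndependent_iff.mp hs g hg
    funext i; exact this i
  obtain ⟨K, hK0, hKA⟩ := T.exists_antilipschitzWith (LinearMap.ker_eq_bot.mpr hinj)
  refine ⟨(s.card : ℝ) * K, ?_⟩
  intro l hl hsupp
  set g : ↥s → ℝ := fun i => l i with hg
  have hTg : T g = ∑ i, l i • a i := by
    change ∑ i : ↥s, l i • a i = ∑ i, l i • a i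
    rw [Finset.sum_coe_sort s (fun i => l i • a i)]
    refine Finset.sum_subset (Finset.subset_univ s) ?_
    intro i _ hi
    have : l i = 0 := by by_contra h; exact hi (hsupp i h)
    simp [this]
  have hsum : ∑ i, l i = ∑ i : ↥s, g i := by
    rw [Finset.sum_coe_sort s (fun i => l i)]
    refine (Finset.sum_subset (Finset.subset_univ s) ?_).symm
    intro i _ hi
    by_contra h; exact hi (hsupp i h)
  have hgn : ∀ i : ↥s, g i ≤ ‖g‖ := by
    intro i
    calc g i ≤ |g i| := le_abs_self _
    _ = ‖g i‖ := rfl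
    _ ≤ ‖g‖ := norm_le_pi_norm g i
  have hgK : ‖g‖ ≤ K * ‖T g‖ := by
    have := hKA.le_mul_dist g 0
    simpa [dist_eq_norm] using this
  calc ∑ i, l i = ∑ i : ↥s, g i := hsum
    _ ≤ ∑ _i : ↥s, ‖g‖ := Finset.sum_le_sum fun i _ => hgn i
    _ = (s.card : ℝ) * ‖g‖ := by rw [Finset.sum_const, Finset.card_univ, Fintype.card_coe, nsmul_eq_mul]
    _ ≤ (s.card : ℝ) * (K * ‖T g‖) := by
        exact mul_le_mul_of_nonneg_left hgK (Nat.cast_nonneg _)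
    _ = (s.card : ℝ) * K * ‖T g‖ := by ring
    _ = (s.card : ℝ) * K * ‖∑ i, l i • a i‖ := by rw [hTg]

/-- Uniform bound: every element of the finitely generated cone has a representation
with ℓ¹-bounded coefficients. -/
lemma conegen_bound (a : Fin m → E) :
    ∃ C : ℝ, 0 ≤ C ∧ ∀ l : Fin m → ℝ, (∀ i, 0 ≤ l i) →
      ∃ g : Fin m → ℝ, (∀ i, 0 ≤ g i) ∧ (∑ i, g i • a i = ∑ i, l i • a i) ∧
        ∑ i, g i ≤ C * ‖∑ i, g i • a i‖ := by
  classical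
  set c : Finset (Fin m) → ℝ := fun s =>
    if h : LinearIndependent ℝ (fun i : ↥s => a i) then Classical.choose (indep_bound a s h)
    else 0 with hc
  refine ⟨∑ s : Finset (Fin m), max (c s) 0, Finset.sum_nonneg fun s _ => le_max_right _ _, ?_⟩
  intro l hl
  obtain ⟨g, hg0, hgsum, hgind⟩ := conic_carath a
    (Finset.univ.filter fun i => l i ≠ 0).card l hl le_rfl
  refine ⟨g, hg0, hgsum, ?_⟩
  set s := Finset.univ.filter fun i => g i ≠ 0 with hs
  have hcs : ∀ l' : Fin m → ℝ, (∀ i, 0 ≤ l' i) → (∀ i, l' i ≠ 0 → i ∈ s) →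
      ∑ i, l' i ≤ c s * ‖∑ i, l' i • a i‖ := by
    simp only [hc]; rw [dif_pos hgind]
    exact Classical.choose_spec (indep_bound a s hgind)
  have h1 : ∑ i, g i ≤ c s * ‖∑ i, g i • a i‖ :=
    hcs g hg0 (fun i hi => Finset.mem_filter.mpr ⟨Finset.mem_univ i, hi⟩)
  have h2 : c s ≤ ∑ s : Finset (Fin m), max (c s) 0 := by
    calc c s ≤ max (c s) 0 := le_max_left _ _
      _ ≤ ∑ s : Finset (Fin m), max (c s) 0 :=
        Finset.single_le_sum (fun t _ => le_max_right (c t) 0) (Finset.mem_univ s)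
  calc ∑ i, g i ≤ c s * ‖∑ i, g i • a i‖ := h1
    _ ≤ (∑ s : Finset (Fin m), max (c s) 0) * ‖∑ i, g i • a i‖ :=
      mul_le_mul_of_nonneg_right h2 (norm_nonneg _)

/-- The finitely generated cone, as a convex cone. -/
noncomputable def conegen (a : Fin m → E) : ConvexCone ℝ (EuclideanSpace ℝ (Fin q)) where
  carrier := {v | ∃ l : Fin m → ℝ, (∀ i, 0 ≤ l i) ∧ v = ∑ i, l i • a i}
  smul_mem' := by
    rintro t ht v ⟨l, hl, rfl⟩
    refine ⟨fun i => t * l i, fun i => mul_nonneg ht.le (hl i), ?_⟩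
    rw [Finset.smul_sum]
    exact Finset.sum_congr rfl fun i _ => smul_smul t (l i) (a i)
  add_mem' := by
    rintro v ⟨l, hl, rfl⟩ w ⟨l', hl', rfl⟩
    refine ⟨fun i => l i + l' i, fun i => add_nonneg (hl i) (hl' i), ?_⟩
    rw [← Finset.sum_add_distrib]
    exact Finset.sum_congr rfl fun i _ => (add_smul (l i) (l' i) (a i)).symm

lemma conegen_closed (a : Fin m → E) : IsClosed (conegen a : Set (EuclideanSpace ℝ (Fin q))) := by
  obtain ⟨C, hC0, hC⟩ := conegen_bound a
  refine IsSeqClosed.isClosed ?_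
  intro u p hu hup
  -- coefficients with bounded ℓ¹ norm
  have hch : ∀ n : ℕ, ∃ g : Fin m → ℝ, (∀ i, 0 ≤ g i) ∧ (u n = ∑ i, g i • a i) ∧
      ∑ i, g i ≤ C * ‖u n‖ := by
    intro n
    obtain ⟨l, hl, hul⟩ := hu n
    obtain ⟨g, hg0, hgsum, hgb⟩ := hC l hl
    exact ⟨g, hg0, by rw [hul, ← hgsum], by rw [hul, ← hgsum]; exact hgb⟩
  choose g hg0 hgsum hgb using hch
  -- the norms ‖u n‖ are bounded
  obtain ⟨Mb, hMb⟩ := ((continuous_norm.tendsto p).comp hup).bddAbove_range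
  have hMb' : ∀ n, ‖u n‖ ≤ Mb := fun n => hMb ⟨n, rfl⟩
  -- the coefficients live in a compact box
  have hbox : ∀ n, g n ∈ Set.Icc (0 : Fin m → ℝ) (fun _ => C * Mb) := by
    intro n
    constructor
    · intro i; exact hg0 n i
    · intro i
      calc g n i ≤ ∑ j, g n j :=
            Finset.single_le_sum (fun j _ => hg0 n j) (Finset.mem_univ i)
        _ ≤ C * ‖u n‖ := hgb n
        _ ≤ C * Mb := mul_le_mul_of_nonneg_left (hMb' n) hC0
  obtain ⟨glim, hglimmem, φ, hφ, hgconv⟩ :=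
    (isCompact_Icc (a := (0 : Fin m → ℝ)) (b := fun _ => C * Mb)).tendsto_subseq hbox
  refine ⟨glim, fun i => hglimmem.1 i, ?_⟩
  have h1 : Tendsto (fun n => u (φ n)) atTop (nhds p) := hup.comp hφ.tendsto_atTop
  have h2 : Tendsto (fun n => u (φ n)) atTop (nhds (∑ i, glim i • a i)) := by
    have : (fun n => u (φ n)) = fun n => ∑ i, g (φ n) i • a i := by
      funext n; exact hgsum (φ n)
    rw [this]
    refine tendsto_finset_sum _ ?_
    intro i _
    exact ((continuous_apply i).continuousAt.tendsto.comp hgconv).smul_const (a i)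
  exact tendsto_nhds_unique h1 h2

/-- Farkas lemma: a vector nonpositive on the polyhedral cone `{z | ∀ i, ⟪a i, z⟫ ≤ 0}`
lies in the cone generated by the `a i`. -/
lemma farkas (a : Fin m → E) (v : EuclideanSpace ℝ (Fin q))
    (hv : ∀ z : EuclideanSpace ℝ (Fin q), (∀ i, ⟪a i, z⟫_ℝ ≤ 0) → ⟪v, z⟫_ℝ ≤ 0) :
    ∃ l : Fin m → ℝ, (∀ i, 0 ≤ l i) ∧ v = ∑ i, l i • a i := by
  classical
  have hne : ((conegen a : ConvexCone ℝ (EuclideanSpace ℝ (Fin q))) :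
      Set (EuclideanSpace ℝ (Fin q))).Nonempty :=
    ⟨0, ⟨fun _ => 0, fun _ => le_rfl, by simp⟩⟩
  by_contra hnot
  have hvn : v ∉ (conegen a : Set (EuclideanSpace ℝ (Fin q))) := by
    rintro ⟨l, hl, hsum⟩; exact hnot ⟨l, hl, hsum⟩
  obtain ⟨f, u, hfs, hfv⟩ :=
    geometric_hahn_banach_closed_point (conegen a).convex (conegen_closed a) hvn
  have hu0 : 0 < u := by
    have h0 := hfs 0 ⟨fun _ => 0, fun _ => le_rfl, by simp⟩
    simpa using h0
  have hai : ∀ i, a i ∈ (conegen a : Set (EuclideanSpace ℝ (Fin q))) := by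
    intro i
    refine ⟨fun j => if j = i then 1 else 0, fun j => by positivity, ?_⟩
    simp
  have hfa : ∀ i, f (a i) ≤ 0 := by
    intro i
    by_contra hpos
    push_neg at hpos
    have ht : 0 < u / f (a i) + 1 := by have := div_pos hu0 hpos; linarith
    have h1 := hfs _ ((conegen a).smul_mem ht (hai i))
    rw [map_smul, smul_eq_mul, add_mul, div_mul_cancel₀ _ hpos.ne'] at h1
    linarith
  set w := (InnerProductSpace.toDual ℝ (EuclideanSpace ℝ (Fin q))).symm f with hw
  have hwz : ∀ z, ⟪w, z⟫_ℝ = f z := fun z => InnerProductSpace.toDual_symm_apply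
  have := hv w (fun i => by rw [real_inner_comm, hwz]; exact hfa i)
  rw [real_inner_comm, hwz] at this
  linarith

/-- Hoffman-type error bound for the polyhedral cone `{z | ∀ i, ⟪a i, z⟫ ≤ 0}`. -/
lemma hoffman (a : Fin m → EuclideanSpace ℝ (Fin q)) :
    ∃ C : ℝ, 0 ≤ C ∧ ∀ d : ℝ, 0 ≤ d → ∀ x : EuclideanSpace ℝ (Fin q),
      (∀ i, ⟪a i, x⟫_ℝ ≤ d) →
      ∃ x' : EuclideanSpace ℝ (Fin q), (∀ i, ⟪a i, x'⟫_ℝ ≤ 0) ∧ ‖x - x'‖ ≤ C * d := by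
  obtain ⟨C, hC0, hC⟩ := conegen_bound a
  refine ⟨C, hC0, ?_⟩
  intro d hd x hx
  set K : Set (EuclideanSpace ℝ (Fin q)) := {z | ∀ i, ⟪a i, z⟫_ℝ ≤ 0} with hK
  have hKne : K.Nonempty := ⟨0, fun i => by simp⟩
  have hKconv : Convex ℝ K := by
    intro z hz w hw s t hs ht hst
    intro i
    have h1 := hz i; have h2 := hw i
    rw [inner_add_right, real_inner_smul_right, real_inner_smul_right]
    nlinarith
  have hKclosed : IsClosed K := by
    have : K = ⋂ i, {z : EuclideanSpace ℝ (Fin q) | ⟪a i, z⟫_ℝ ≤ 0} := by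
      ext z; simp [hK, Set.mem_iInter]
    rw [this]
    exact isClosed_iInter fun i =>
      isClosed_le (Continuous.inner continuous_const continuous_id) continuous_const
  have hKadd : ∀ z w, z ∈ K → w ∈ K → z + w ∈ K := by
    intro z w hz hw i
    rw [inner_add_right]
    linarith [hz i, hw i]
  obtain ⟨x', hx'K, hx'inf⟩ :=
    exists_norm_eq_iInf_of_complete_convex hKne hKclosed.isComplete hKconv x
  have hvar := (norm_eq_iInf_iff_real_inner_le_zero hKconv hx'K).mp hx'inf
  set v := x - x' with hv
  -- v is nonpositive on K
  have hvK' : ∀ z : EuclideanSpace ℝ (Fin q), (∀ i, ⟪a i, z⟫_ℝ ≤ 0) → ⟪v, z⟫_ℝ ≤ 0 := by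
    intro z hz
    have := hvar (x' + z) (hKadd x' z hx'K hz)
    simpa using this
  -- ⟪v, x'⟫ = 0
  have hvx' : ⟪v, x'⟫_ℝ = 0 := by
    have hzero : (0 : EuclideanSpace ℝ (Fin q)) ∈ K := fun i => by simp
    have h1 := hvar 0 hzero
    have h2 := hvar (x' + x') (hKadd x' x' hx'K hx'K)
    rw [zero_sub, inner_neg_right] at h1
    rw [add_sub_cancel_right] at h2
    linarith
  obtain ⟨l, hl0, hlv⟩ := farkas a v hvK'
  obtain ⟨g, hg0, hgsum, hgb⟩ := hC l hl0
  have hveq : v = ∑ i, g i • a i := by rw [hlv, hgsum]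
  refine ⟨x', hx'K, ?_⟩
  have hvx : ⟪v, x⟫_ℝ = ‖v‖ * ‖v‖ := by
    have : ⟪v, x⟫_ℝ = ⟪v, v⟫_ℝ + ⟪v, x'⟫_ℝ := by
      rw [← inner_add_right, hv, sub_add_cancel]
    rw [this, hvx', add_zero, real_inner_self_eq_norm_mul_norm]
  have hsumle : ⟪v, x⟫_ℝ ≤ C * ‖v‖ * d := by
    have h1 : ⟪v, x⟫_ℝ = ∑ i, g i * ⟪a i, x⟫_ℝ := by
      rw [hveq, sum_inner]
      exact Finset.sum_congr rfl fun i _ => real_inner_smul_left (a i) x (g i)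
    have h2 : ∑ i, g i * ⟪a i, x⟫_ℝ ≤ ∑ i, g i * d :=
      Finset.sum_le_sum fun i _ => mul_le_mul_of_nonneg_left (hx i) (hg0 i)
    have h3 : ∑ i, g i * d = (∑ i, g i) * d := by rw [Finset.sum_mul]
    have h4 : (∑ i, g i) * d ≤ (C * ‖∑ i, g i • a i‖) * d :=
      mul_le_mul_of_nonneg_right hgb hd
    rw [h1, ← hveq] at *
    calc ∑ i, g i * ⟪a i, x⟫_ℝ ≤ (∑ i, g i) * d := by rw [← h3]; exact h2
      _ ≤ (C * ‖v‖) * d := by rw [← hveq] at h4; exact h4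
      _ = C * ‖v‖ * d := by ring
  have hnv : ‖v‖ ≤ C * d := by
    rcases eq_or_lt_of_le (norm_nonneg v) with h | h
    · rw [← h]; positivity
    · have : ‖v‖ * ‖v‖ ≤ (C * d) * ‖v‖ := by rw [← hvx]; linarith [hsumle]
      exact le_of_mul_le_mul_right this h
  exact hnv

lemma inner_eval {q : ℕ} (w x : Fin q → ℝ) :
    ⟪((WithLp.equiv 2 (Fin q → ℝ)).symm w), ((WithLp.equiv 2 (Fin q → ℝ)).symm x)⟫_ℝ
      = ∑ l, w l * x l := by
  simp [PiLp.inner_apply, RCLike.inner_apply, mul_comm]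

lemma inner_eval' {q : ℕ} (w : Fin q → ℝ) (y : EuclideanSpace ℝ (Fin q)) :
    ⟪((WithLp.equiv 2 (Fin q → ℝ)).symm w), y⟫_ℝ
      = ∑ l, w l * (WithLp.equiv 2 (Fin q → ℝ)) y l := by
  simp [PiLp.inner_apply, RCLike.inner_apply, mul_comm]

lemma pinorm_le {q : ℕ} (y : EuclideanSpace ℝ (Fin q)) :
    ‖(WithLp.equiv 2 (Fin q → ℝ)) y‖ ≤ ‖y‖ := by
  rw [pi_norm_le_iff_of_nonneg (norm_nonneg y)]
  intro l
  rw [EuclideanSpace.norm_eq]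
  have h1 : ‖(WithLp.equiv 2 (Fin q → ℝ)) y l‖ = Real.sqrt (‖y l‖ ^ 2) := by
    rw [Real.sqrt_sq (norm_nonneg _)]; rfl
  rw [h1]
  exact Real.sqrt_le_sqrt (Finset.single_le_sum (fun i _ => sq_nonneg ‖y i‖) (Finset.mem_univ l))

lemma abs_le_sum_abs {α : Type*} [Fintype α] (f : α → ℝ) (i : α) : f i ≤ ∑ i', |f i'| :=
  le_trans (le_abs_self _) (Finset.single_le_sum (fun j _ => abs_nonneg (f j)) (Finset.mem_univ i))

lemma abs_le_double_sum {α β : Type*} [Fintype α] [Fintype β] (f : α → β → ℝ) (i : α) (j : β) :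
    |f i j| ≤ ∑ i', ∑ j', |f i' j'| := by
  calc |f i j| ≤ ∑ j', |f i j'| :=
        Finset.single_le_sum (f := fun j' => |f i j'|) (fun j' _ => abs_nonneg _)
          (Finset.mem_univ j)
    _ ≤ ∑ i', ∑ j', |f i' j'| :=
        Finset.single_le_sum (f := fun i' => ∑ j', |f i' j'|) (fun i' _ =>
          Finset.sum_nonneg fun j' _ => abs_nonneg _) (Finset.mem_univ i)

lemma row_sum_le_double_sum {α β : Type*} [Fintype α] [Fintype β] (f : α → β → ℝ) (i : α) :
    ∑ j', |f i j'| ≤ ∑ i', ∑ j', |f i' j'| :=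
  Finset.single_le_sum (f := fun i' => ∑ j', |f i' j'|) (fun i' _ =>
    Finset.sum_nonneg fun j' _ => abs_nonneg _) (Finset.mem_univ i)

/-- Proximity of `H_B` to `Cone_0`: there is a constant `C` (independent of `B`) such
that every `x ∈ H_B = {x ∈ H_S : ∃ o ≥ 0, c·o ≤ B, x + oᵀM ∈ H_T}` is within sup-norm
distance `C(B+1)` of a point `x′` with `A_S x′ ≤ 0` and `A_T x′ ≤ 0`
(i.e. `x′ ∈ Cone_0 = C_S° ∩ C_T°`). -/
theorem stmt9 {q k mS mT : ℕ}
    (AS : Matrix (Fin mS) (Fin q) ℝ) (bS : Fin mS → ℝ)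
    (AT : Matrix (Fin mT) (Fin q) ℝ) (bT : Fin mT → ℝ)
    (M : Matrix (Fin k) (Fin q) ℝ)
    (c : Fin k → ℝ) (hc : ∀ i, 0 < c i) :
    ∃ C : ℝ, ∀ B : ℝ, 0 ≤ B → ∀ x : Fin q → ℝ,
      AS.mulVec x ≤ bS →
      (∃ o : Fin k → ℝ, (∀ i, 0 ≤ o i) ∧ c ⬝ᵥ o ≤ B ∧
        AT.mulVec (x + Matrix.vecMul o M) ≤ bT) →
      ∃ x' : Fin q → ℝ, AS.mulVec x' ≤ 0 ∧ AT.mulVec x' ≤ 0 ∧ ‖x - x'‖ ≤ C * (B + 1) := by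
  classical
  obtain ⟨Ch, hCh0, hCh⟩ := hoffman
    (fun i => (WithLp.equiv 2 (Fin q → ℝ)).symm
      (Fin.append (fun i' => AS i') (fun j' => AT j') i))
  set κS : ℝ := ∑ i, |bS i| with hκS
  set κT : ℝ := ∑ j, |bT j| with hκT
  set κA : ℝ := ∑ j, ∑ l, |AT j l| with hκA
  set κM : ℝ := ∑ i, ∑ l, |M i l| with hκM
  set ι : ℝ := ∑ i, 1 / c i with hι
  have hκS0 : 0 ≤ κS := Finset.sum_nonneg fun i _ => abs_nonneg _
  have hκT0 : 0 ≤ κT := Finset.sum_nonneg fun i _ => abs_nonneg _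
  have hκA0 : 0 ≤ κA := Finset.sum_nonneg fun j _ => Finset.sum_nonneg fun l _ => abs_nonneg _
  have hκM0 : 0 ≤ κM := Finset.sum_nonneg fun i _ => Finset.sum_nonneg fun l _ => abs_nonneg _
  have hι0 : 0 ≤ ι := Finset.sum_nonneg fun i _ => one_div_nonneg.mpr (hc i).le
  refine ⟨Ch * (κS + κT + κA * ι * κM), ?_⟩
  intro B hB x hSx hex
  obtain ⟨o, ho0, hoB, hTx⟩ := hex
  set u := Matrix.vecMul o M with hu
  -- bound on ∑ o
  have hosum : ∑ i, o i ≤ B * ι := by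
    have h1 : ∀ i, o i ≤ B * (1 / c i) := by
      intro i
      have h2 : c i * o i ≤ c ⬝ᵥ o := by
        rw [dotProduct]
        exact Finset.single_le_sum (fun j _ => mul_nonneg (hc j).le (ho0 j)) (Finset.mem_univ i)
      rw [mul_one_div]
      exact (le_div_iff₀ (hc i)).mpr (by nlinarith [le_trans h2 hoB])
    calc ∑ i, o i ≤ ∑ i, B * (1 / c i) := Finset.sum_le_sum fun i _ => h1 i
      _ = B * ι := by rw [hι, Finset.mul_sum]
  -- bound on the correction term
  have huB : ∀ l, |u l| ≤ B * ι * κM := by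
    intro l
    calc |u l| = |∑ i, o i * M i l| := by rw [hu, Matrix.vecMul, dotProduct]
      _ ≤ ∑ i, |o i * M i l| := Finset.abs_sum_le_sum_abs _ _
      _ = ∑ i, o i * |M i l| := Finset.sum_congr rfl fun i _ => by
            rw [abs_mul, abs_of_nonneg (ho0 i)]
      _ ≤ ∑ i, o i * κM := Finset.sum_le_sum fun i _ =>
            mul_le_mul_of_nonneg_left (by rw [hκM]; exact abs_le_double_sum M i l) (ho0 i)
      _ = (∑ i, o i) * κM := by rw [Finset.sum_mul]
      _ ≤ (B * ι) * κM := mul_le_mul_of_nonneg_right hosum hκM0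
  -- the row bounds
  have hd0 : 0 ≤ (κS + κT + κA * ι * κM) * (B + 1) := by positivity
  have hrows : ∀ i, ⟪(fun i => (WithLp.equiv 2 (Fin q → ℝ)).symm
      (Fin.append (fun i' => AS i') (fun j' => AT j') i)) i,
      (WithLp.equiv 2 (Fin q → ℝ)).symm x⟫_ℝ ≤ (κS + κT + κA * ι * κM) * (B + 1) := by
    intro i
    refine Fin.addCases (motive := fun i => ⟪(WithLp.equiv 2 (Fin q → ℝ)).symm
      (Fin.append (fun i' => AS i') (fun j' => AT j') i),
      (WithLp.equiv 2 (Fin q → ℝ)).symm x⟫_ℝ ≤ (κS + κT + κA * ι * κM) * (B + 1)) ?_ ?_ i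
    · intro i'
      rw [Fin.append_left, inner_eval]
      have h1 : ∑ l, AS i' l * x l ≤ bS i' := by
        have := hSx i'
        rwa [Matrix.mulVec, dotProduct] at this
      have h2 : bS i' ≤ κS := by rw [hκS]; exact abs_le_sum_abs bS i'
      have e1 : 0 ≤ κS * B := mul_nonneg hκS0 hB
      have e2 : 0 ≤ κT * (B + 1) := mul_nonneg hκT0 (by linarith)
      have e3 : 0 ≤ κA * ι * κM * (B + 1) :=
        mul_nonneg (mul_nonneg (mul_nonneg hκA0 hι0) hκM0) (by linarith)
      nlinarith
    · intro j
      rw [Fin.append_right, inner_eval]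
      have hTj : ∑ l, AT j l * (x l + u l) ≤ bT j := by
        have := hTx j
        rwa [Matrix.mulVec, dotProduct] at this
      have hsplit : ∑ l, AT j l * x l
          = (∑ l, AT j l * (x l + u l)) - ∑ l, AT j l * u l := by
        rw [← Finset.sum_sub_distrib]
        exact Finset.sum_congr rfl fun l _ => by ring
      have hcorr : |∑ l, AT j l * u l| ≤ κA * (B * ι * κM) := by
        calc |∑ l, AT j l * u l| ≤ ∑ l, |AT j l * u l| := Finset.abs_sum_le_sum_abs _ _
          _ = ∑ l, |AT j l| * |u l| := Finset.sum_congr rfl fun l _ => abs_mul _ _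
          _ ≤ ∑ l, |AT j l| * (B * ι * κM) := Finset.sum_le_sum fun l _ =>
              mul_le_mul_of_nonneg_left (huB l) (abs_nonneg _)
          _ = (∑ l, |AT j l|) * (B * ι * κM) := by rw [Finset.sum_mul]
          _ ≤ κA * (B * ι * κM) := by
              refine mul_le_mul_of_nonneg_right ?_ (by positivity)
              rw [hκA]; exact row_sum_le_double_sum AT j
      have h2 : bT j ≤ κT := by rw [hκT]; exact abs_le_sum_abs bT j
      have h3 : ∑ l, AT j l * u l ≥ -(κA * (B * ι * κM)) := neg_le_of_abs_le hcorr
      have e1 : 0 ≤ κS * (B + 1) := mul_nonneg hκS0 (by linarith)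
      have e2 : 0 ≤ κT * B := mul_nonneg hκT0 hB
      have e3 : 0 ≤ κA * ι * κM := mul_nonneg (mul_nonneg hκA0 hι0) hκM0
      nlinarith
  obtain ⟨x', hx'cone, hx'norm⟩ := hCh _ hd0 ((WithLp.equiv 2 (Fin q → ℝ)).symm x) hrows
  refine ⟨(WithLp.equiv 2 (Fin q → ℝ)) x', ?_, ?_, ?_⟩
  · intro i
    have h := hx'cone (Fin.castAdd mT i)
    rw [Fin.append_left, inner_eval'] at h
    show (AS.mulVec ((WithLp.equiv 2 (Fin q → ℝ)) x')) i ≤ (0 : Fin mS → ℝ) i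
    rw [Matrix.mulVec, dotProduct, Pi.zero_apply]
    exact h
  · intro j
    have h := hx'cone (Fin.natAdd mS j)
    rw [Fin.append_right, inner_eval'] at h
    show (AT.mulVec ((WithLp.equiv 2 (Fin q → ℝ)) x')) j ≤ (0 : Fin mT → ℝ) j
    rw [Matrix.mulVec, dotProduct, Pi.zero_apply]
    exact h
  · have heq : x - (WithLp.equiv 2 (Fin q → ℝ)) x'
        = (WithLp.equiv 2 (Fin q → ℝ)) ((WithLp.equiv 2 (Fin q → ℝ)).symm x - x') := rfl
    rw [heq]
    refine le_trans (pinorm_le _) ?_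
    calc ‖(WithLp.equiv 2 (Fin q → ℝ)).symm x - x'‖
        ≤ Ch * ((κS + κT + κA * ι * κM) * (B + 1)) := hx'norm
      _ = Ch * (κS + κT + κA * ι * κM) * (B + 1) := by ring
end

section
/- Consider the PMV-instability setting with integer constraint matrices. Suppose the set of unstable integer histograms S_{n,B} = {x ∈ H_S ∩ ℤ_{≥0}^q : x·1 = n, ∃ o ∈ ℤ_{≥0}^{|O|}, c·o ≤ B, x + oᵀM_O ∈ H_T} is nonempty. Then there exists a constant C′ (independent of n and B) such that for every real vector x ∈ H_{B,n} ∩ ℝ_{≥0}^q (the fractional relaxation: x ∈ H_S, x·1 = n, x ≥ 0, and ∃ o ∈ ℝ_{≥0}^{|O|} with c·o ≤ B and x + oᵀM_O ∈ H_T), there exists an integer vector x′ ∈ S_{n,B} with ‖x − x′‖_∞ < C′. -/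
open Matrix PointedCone

/-!
This is the proximity theorem of Cook, Gerards, Schrijver and Tardos for a single integer system
`A z ≤ b` in the variables `z = (x, o)`. For an integer solution `z` and a fractional one `x`,
the difference `x - z` lies in the polyhedral cone cut out by the rows of `A`, each taken with the
sign it has at `x - z`. By Fourier–Motzkin elimination this cone is generated by finitely many
integer vectors `g`. Writing `x - z = ∑ λ_g g` and rounding the coefficients down gives the
integer point `z' = z + ∑ ⌊λ_g⌋ g`: each constraint value at `z'` lies between its values at `z`
and at `x`, and `‖x - z'‖ ≤ ∑ ‖g‖`. There are finitely many sign patterns, so the bound does not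
depend on `b`, hence not on `n` and `B`.
-/

section IntCast

lemma Int.cast_dotProduct {J R : Type*} [Fintype J] [NonAssocRing R] (a g : J → ℤ) :
    ((a ⬝ᵥ g : ℤ) : R) = (Int.cast ∘ a) ⬝ᵥ (Int.cast ∘ g) := by
  simpa using (Int.castRingHom R).map_dotProduct a g

lemma Matrix.map_intCast_mulVec_apply {I J R : Type*} [Fintype J] [NonAssocRing R]
    (A : Matrix I J ℤ) (v : J → R) (i : I) : (A.map Int.cast *ᵥ v) i = (Int.cast ∘ A i) ⬝ᵥ v :=
  rfl

lemma Matrix.map_intCast_mulVec_le_iff {m n R : Type*} [Fintype n] [Ring R] [LinearOrder R]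
    [IsStrictOrderedRing R] (A : Matrix m n ℤ) (v : n → ℤ) (b : m → ℤ) :
    A.map Int.cast *ᵥ (Int.cast ∘ v) ≤ (Int.cast ∘ b : m → R) ↔ A *ᵥ v ≤ b := by
  simp only [Pi.le_def, mulVec, dotProduct, map_apply, Function.comp_apply]
  exact forall_congr' fun i => by exact_mod_cast Iff.rfl

end IntCast

section FourierMotzkin

variable {𝕜 E : Type*} [Field 𝕜] [LinearOrder 𝕜] [IsStrictOrderedRing 𝕜]
  [AddCommGroup E] [Module 𝕜 E]

lemma PointedCone.mem_hull_image_finset_iff {ι : Type*} {v : ι → E} {s : Finset ι} {x : E} :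
    x ∈ hull 𝕜 (v '' s) ↔ ∃ c : ι → 𝕜, (∀ i, 0 ≤ c i) ∧ ∑ i ∈ s, c i • v i = x := by
  rw [hull, Submodule.mem_span_image_finset_iff_exists_fun']
  constructor
  · rintro ⟨c, rfl⟩
    exact ⟨fun i => c i, fun i => (c i).2, rfl⟩
  · rintro ⟨c, hc, rfl⟩
    exact ⟨fun i => ⟨c i, hc i⟩, by simp [Nonneg.mk_smul]⟩

lemma PointedCone.smul_mem_hull_of_mem_of_neg_mem {s : Set E} {v : E} (hv : v ∈ s) (hnv : -v ∈ s)
    (r : 𝕜) : r • v ∈ hull 𝕜 s := by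
  rcases le_total 0 r with hr | hr
  · exact smul_mem _ hr (subset_hull hv)
  · simpa using smul_mem _ (neg_nonneg.2 hr) (subset_hull hnv)

theorem PointedCone.mem_hull_fourierMotzkin (φ : E →ₗ[𝕜] 𝕜) {S : Finset E} {x : E}
    (hx : x ∈ hull 𝕜 (S : Set E)) (hφx : 0 ≤ φ x) :
    x ∈ hull 𝕜 ({g ∈ (S : Set E) | 0 ≤ φ g} ∪ Set.image2 (fun p n => φ p • n - φ n • p)
      {p ∈ (S : Set E) | 0 ≤ φ p} {n ∈ (S : Set E) | φ n < 0}) := by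
  classical
  obtain ⟨c, hc, rfl⟩ := mem_hull_image_finset_iff.1 (Set.image_id (S : Set E) ▸ hx)
  simp only [id] at hφx ⊢
  set K := hull 𝕜 ({g ∈ (S : Set E) | 0 ≤ φ g} ∪ Set.image2 (fun p n => φ p • n - φ n • p)
      {p ∈ (S : Set E) | 0 ≤ φ p} {n ∈ (S : Set E) | φ n < 0})
  set P := S.filter (0 ≤ φ ·)
  set N := S.filter (φ · < 0)
  set u := ∑ p ∈ P, c p • p
  set v := ∑ n ∈ N, c n • n
  set s := ∑ p ∈ P, c p * φ p
  set T := ∑ n ∈ N, c n * -φ n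
  have hsplit : ∑ g ∈ S, c g • g = u + v := by
    simpa [not_le] using (Finset.sum_filter_add_sum_filter_not S (0 ≤ φ ·) fun g => c g • g).symm
  have hs : 0 ≤ s := Finset.sum_nonneg fun p hp => mul_nonneg (hc p) (Finset.mem_filter.1 hp).2
  have hT : 0 ≤ T := Finset.sum_nonneg fun n hn =>
    mul_nonneg (hc n) (neg_nonneg.2 (Finset.mem_filter.1 hn).2.le)
  have hTs : T ≤ s := by
    have : φ (u + v) = s - T := by simp [u, v, s, T, map_sum, sub_eq_add_neg]
    linarith [hsplit ▸ this]
  have hu : u ∈ K :=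
    Submodule.sum_mem _ fun p hp =>
      smul_mem _ (hc p) (subset_hull (Or.inl (Finset.mem_filter.1 hp)))
  rw [hsplit]
  rcases hs.eq_or_lt with hs0 | hs0
  · -- here `T ≤ s = 0`, so `c n = 0` whenever `φ n < 0`
    have hv : v = 0 := Finset.sum_eq_zero fun n hn => by
      have hφn := (Finset.mem_filter.1 hn).2
      have := (Finset.sum_eq_zero_iff_of_nonneg fun n hn =>
        mul_nonneg (hc n) (neg_nonneg.2 (Finset.mem_filter.1 hn).2.le)).1
        (le_antisymm (hs0 ▸ hTs) hT) n hn
      simp [(mul_eq_zero.1 this).resolve_right (by linarith)]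
    rwa [hv, add_zero]
  · have hpairs : ∑ p ∈ P, ∑ n ∈ N, (c p * c n / s) • (φ p • n - φ n • p) =
        s⁻¹ • (s • v + T • u) := by
      calc _ = s⁻¹ • ∑ p ∈ P, ∑ n ∈ N,
              ((c p * φ p) • (c n • n) + (c n * -φ n) • (c p • p)) := by
            simp_rw [Finset.smul_sum]
            refine Finset.sum_congr rfl fun p _ => Finset.sum_congr rfl fun n _ => ?_
            module
        _ = s⁻¹ • (s • v + T • u) := by
            rw [Finset.sum_smul_sum, Finset.sum_smul_sum, Finset.sum_comm (s := N)]
            simp_rw [Finset.sum_add_distrib]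
    have hx : u + v =
        (1 - T / s) • u + ∑ p ∈ P, ∑ n ∈ N, (c p * c n / s) • (φ p • n - φ n • p) := by
      rw [hpairs, smul_add, smul_smul, inv_mul_cancel₀ hs0.ne', one_smul, smul_smul]
      module
    rw [hx]
    refine add_mem (smul_mem _ (sub_nonneg.2 ((div_le_one hs0).2 hTs)) hu) ?_
    refine Submodule.sum_mem _ fun p hp => Submodule.sum_mem _ fun n hn => ?_
    refine smul_mem _ (div_nonneg (mul_nonneg (hc p) (hc n)) hs) (subset_hull (Or.inr ?_))
    exact ⟨p, Finset.mem_filter.1 hp, n, Finset.mem_filter.1 hn, rfl⟩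

end FourierMotzkin

section IntegerGenerators

variable {J 𝕜 : Type*} [Fintype J] [Field 𝕜] [LinearOrder 𝕜] [IsStrictOrderedRing 𝕜]

lemma mem_hull_signed_basis [DecidableEq J] (x : J → 𝕜) :
    x ∈ hull 𝕜 (Set.range (Pi.single · 1) ∪ Set.range (-Pi.single · 1)) := by
  rw [← Finset.univ_sum_single x]
  refine Submodule.sum_mem _ fun j _ => ?_
  rw [← mul_one (x j), ← smul_eq_mul, Pi.single_smul']
  exact smul_mem_hull_of_mem_of_neg_mem (v := Pi.single j 1) (Or.inl ⟨j, rfl⟩) (Or.inr ⟨j, rfl⟩)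
    (x j)

theorem exists_int_generators (L : Finset (J → ℤ)) :
    ∃ G : Finset (J → ℤ), (∀ g ∈ G, ∀ a ∈ L, 0 ≤ a ⬝ᵥ g) ∧
      ∀ x : J → 𝕜, (∀ a ∈ L, 0 ≤ (Int.cast ∘ a) ⬝ᵥ x) →
        x ∈ hull 𝕜 ((Int.cast ∘ ·) '' (G : Set (J → ℤ))) := by
  classical
  induction L using Finset.induction_on with
  | empty =>
    refine ⟨Finset.univ.image (Pi.single · 1) ∪ Finset.univ.image (-Pi.single · 1), by simp,
      fun x _ => ?_⟩
    refine Submodule.span_mono ?_ (mem_hull_signed_basis x)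
    rintro _ (⟨j, rfl⟩ | ⟨j, rfl⟩)
    · exact ⟨Pi.single j 1, by simp, by ext; simp [Pi.single_apply]⟩
    · exact ⟨-Pi.single j 1, by simp, by ext; simp [Pi.single_apply]⟩
  | insert a L _ ih =>
    obtain ⟨G, hGL, hG⟩ := ih
    set P := G.filter (0 ≤ a ⬝ᵥ ·)
    set N := G.filter (a ⬝ᵥ · < 0)
    refine ⟨P ∪ (P ×ˢ N).image (fun pn => (a ⬝ᵥ pn.1) • pn.2 - (a ⬝ᵥ pn.2) • pn.1), ?_, ?_⟩
    · simp only [Finset.mem_union, Finset.mem_image, Finset.mem_product, Finset.forall_mem_insert]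
      rintro _ (hg | ⟨⟨p, n⟩, ⟨hp, hn⟩, rfl⟩)
      · exact ⟨(Finset.mem_filter.1 hg).2, hGL _ (Finset.mem_filter.1 hg).1⟩
      · have hap := (Finset.mem_filter.1 hp).2
        have han := (Finset.mem_filter.1 hn).2
        simp only [dotProduct_sub, dotProduct_smul, smul_eq_mul]
        refine ⟨by rw [mul_comm]; simp, fun b hb => ?_⟩
        have := hGL p (Finset.mem_filter.1 hp).1 b hb
        have := hGL n (Finset.mem_filter.1 hn).1 b hb
        nlinarith
    · intro x hx
      rw [Finset.forall_mem_insert] at hx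
      have hφ := mem_hull_fourierMotzkin (dotProductBilin 𝕜 𝕜 (Int.cast ∘ a))
        (S := G.image (Int.cast ∘ ·)) (by simpa using hG x hx.2) (by simpa using hx.1)
      refine Submodule.span_mono ?_ hφ
      simp only [Finset.coe_image, dotProductBilin_apply_apply]
      rintro _ (⟨⟨g, hg, rfl⟩, hag⟩ | ⟨_, ⟨⟨p, hp, rfl⟩, hap⟩, _, ⟨⟨n, hn, rfl⟩, han⟩, rfl⟩)
      · rw [← Int.cast_dotProduct, Int.cast_nonneg_iff] at hag
        exact ⟨g, Finset.mem_union_left _ (Finset.mem_filter.2 ⟨hg, hag⟩), rfl⟩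
      · rw [← Int.cast_dotProduct, Int.cast_nonneg_iff] at hap
        rw [← Int.cast_dotProduct, Int.cast_lt_zero] at han
        refine ⟨(a ⬝ᵥ p) • n - (a ⬝ᵥ n) • p, Finset.mem_union_right _ (Finset.mem_image.2
          ⟨(p, n), Finset.mem_product.2 ⟨Finset.mem_filter.2 ⟨hp, hap⟩,
            Finset.mem_filter.2 ⟨hn, han⟩⟩, rfl⟩), ?_⟩
        ext j
        simp [← Int.cast_dotProduct]

end IntegerGenerators

section Proximity

variable {I J : Type*} [Fintype I] [Fintype J]

theorem exists_int_approx_of_mem_polyhedralCone (L : Finset (J → ℤ)) :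
    ∃ C : ℝ, ∀ w : J → ℝ, (∀ a ∈ L, 0 ≤ (Int.cast ∘ a) ⬝ᵥ w) →
      ∃ w' : J → ℤ, (∀ a ∈ L, 0 ≤ a ⬝ᵥ w' ∧
        (Int.cast ∘ a) ⬝ᵥ (Int.cast ∘ w') ≤ (Int.cast ∘ a) ⬝ᵥ w) ∧ ‖w - Int.cast ∘ w'‖ ≤ C := by
  obtain ⟨G, hGL, hG⟩ := exists_int_generators (𝕜 := ℝ) L
  refine ⟨∑ g ∈ G, ‖(Int.cast ∘ g : J → ℝ)‖, fun w hw => ?_⟩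
  obtain ⟨c, hc, rfl⟩ := mem_hull_image_finset_iff.1 (hG w hw)
  have hcast : (Int.cast ∘ ∑ g ∈ G, ⌊c g⌋ • g : J → ℝ) = ∑ g ∈ G, (⌊c g⌋ : ℝ) • (Int.cast ∘ g) := by
    ext j
    simp [Finset.sum_apply]
  have hfract : ∑ g ∈ G, c g • (Int.cast ∘ g : J → ℝ) - Int.cast ∘ ∑ g ∈ G, ⌊c g⌋ • g =
      ∑ g ∈ G, Int.fract (c g) • (Int.cast ∘ g) := by
    rw [hcast, ← Finset.sum_sub_distrib]
    simp_rw [← sub_smul, Int.self_sub_floor]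
  refine ⟨∑ g ∈ G, ⌊c g⌋ • g, fun a ha => ⟨?_, ?_⟩, ?_⟩
  · simp only [dotProduct_sum, dotProduct_smul, smul_eq_mul]
    exact Finset.sum_nonneg fun g hg => mul_nonneg (Int.floor_nonneg.2 (hc g)) (hGL g hg a ha)
  · rw [← sub_nonneg, ← dotProduct_sub, hfract]
    simp only [dotProduct_sum, dotProduct_smul, smul_eq_mul, ← Int.cast_dotProduct]
    exact Finset.sum_nonneg fun g hg =>
      mul_nonneg (Int.fract_nonneg _) (Int.cast_nonneg (hGL g hg a ha))
  · rw [hfract]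
    refine (norm_sum_le _ _).trans (Finset.sum_le_sum fun g _ => ?_)
    rw [norm_smul, Real.norm_of_nonneg (Int.fract_nonneg _)]
    exact mul_le_of_le_one_left (norm_nonneg _) (Int.fract_lt_one _).le

theorem exists_int_near_polyhedron (A : Matrix I J ℤ) :
    ∃ C : ℝ, ∀ (b : I → ℝ) (z : J → ℤ), A.map Int.cast *ᵥ (Int.cast ∘ z) ≤ b →
      ∀ x : J → ℝ, A.map Int.cast *ᵥ x ≤ b →
        ∃ z' : J → ℤ, A.map Int.cast *ᵥ (Int.cast ∘ z') ≤ b ∧ ‖x - Int.cast ∘ z'‖ ≤ C := by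
  classical
  choose C hC using fun s : Finset I =>
    exists_int_approx_of_mem_polyhedralCone (Finset.univ.image fun i => if i ∈ s then -A i else A i)
  obtain ⟨C₀, hC₀⟩ := (Set.finite_range C).bddAbove
  refine ⟨C₀, fun b z hz x hx => ?_⟩
  set r := A.map Int.cast *ᵥ (x - Int.cast ∘ z)
  have hneg : ∀ a : J → ℤ, (Int.cast ∘ (-a) : J → ℝ) = -(Int.cast ∘ a) :=
    fun a => funext fun _ => Int.cast_neg _
  set s := Finset.univ.filter fun i => r i < 0
  obtain ⟨w', hw', hdist⟩ := hC s (x - Int.cast ∘ z) (by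
    simp only [Finset.forall_mem_image, Finset.mem_univ, true_implies]
    intro i
    by_cases hi : i ∈ s
    · rw [if_pos hi, hneg, neg_dotProduct, neg_nonneg]
      exact (Finset.mem_filter.1 hi).2.le
    · rw [if_neg hi]
      have : ¬r i < 0 := by simpa [s] using hi
      exact not_lt.1 this)
  refine ⟨z + w', fun i => ?_, ?_⟩
  · have hwi := hw' _ (Finset.mem_image_of_mem _ (Finset.mem_univ i))
    have hcast : (Int.cast ∘ (z + w') : J → ℝ) = Int.cast ∘ z + Int.cast ∘ w' :=
      funext fun _ => Int.cast_add _ _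
    have hzi := hz i
    have hxi := hx i
    rw [Matrix.map_intCast_mulVec_apply] at hzi hxi ⊢
    rw [hcast, dotProduct_add]
    by_cases hi : i ∈ s
    · rw [if_pos hi, neg_dotProduct, neg_nonneg, ← Int.cast_nonpos (R := ℝ), Int.cast_dotProduct]
        at hwi
      linarith [hwi.1]
    · rw [if_neg hi, dotProduct_sub] at hwi
      linarith [hwi.2]
  · have : x - Int.cast ∘ (z + w') = x - Int.cast ∘ z - Int.cast ∘ w' := by
      ext j; simp [sub_sub]
    rw [this]
    exact hdist.trans (hC₀ ⟨s, rfl⟩)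

end Proximity

section PMV

variable {q k mS mT : ℕ} {R : Type*} [CommRing R]

/-- The constraints on `(x, o)`, row blocks in order: `-x ≤ 0`, `AS x ≤ bS`, `∑ x = n` (as two
inequalities), `-o ≤ 0`, `c ⬝ᵥ o ≤ B`, `AT (x + o ᵥ* M) ≤ bT`; see `pmvBound`. -/
def pmvMatrix (AS : Matrix (Fin mS) (Fin q) R) (AT : Matrix (Fin mT) (Fin q) R)
    (M : Matrix (Fin k) (Fin q) R) (c : Fin k → R) :
    Matrix (Fin q ⊕ Fin mS ⊕ (Unit ⊕ Unit) ⊕ Fin k ⊕ Unit ⊕ Fin mT) (Fin q ⊕ Fin k) R :=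
  fromRows (fromCols (-1) 0) <| fromRows (fromCols AS 0) <|
    fromRows (fromRows (fromCols (replicateRow Unit 1) 0) (-fromCols (replicateRow Unit 1) 0)) <|
    fromRows (fromCols 0 (-1)) <| fromRows (fromCols 0 (replicateRow Unit c)) <|
    fromCols AT (AT * Mᵀ)

def pmvBound (bS : Fin mS → R) (bT : Fin mT → R) (n B : R) :
    Fin q ⊕ Fin mS ⊕ (Unit ⊕ Unit) ⊕ Fin k ⊕ Unit ⊕ Fin mT → R :=
  Sum.elim 0 <| Sum.elim bS <| Sum.elim (Sum.elim (fun _ => n) (fun _ => -n)) <|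
    Sum.elim 0 <| Sum.elim (fun _ => B) bT

lemma pmvMatrix_map {S : Type*} [CommRing S] (f : R →+* S) (AS : Matrix (Fin mS) (Fin q) R)
    (AT : Matrix (Fin mT) (Fin q) R) (M : Matrix (Fin k) (Fin q) R) (c : Fin k → R) :
    (pmvMatrix AS AT M c).map f = pmvMatrix (AS.map f) (AT.map f) (M.map f) (f ∘ c) := by
  ext (i | i | (i | i) | i | i | i) (j | j) <;>
    simp [pmvMatrix, Matrix.mul_apply, Matrix.one_apply, apply_ite f]

lemma pmvMatrix_map_intCast {S : Type*} [CommRing S] (AS : Matrix (Fin mS) (Fin q) ℤ)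
    (AT : Matrix (Fin mT) (Fin q) ℤ) (M : Matrix (Fin k) (Fin q) ℤ) (c : Fin k → ℤ) :
    (pmvMatrix AS AT M c).map (Int.cast : ℤ → S) =
      pmvMatrix (AS.map Int.cast) (AT.map Int.cast) (M.map Int.cast) (Int.cast ∘ c) := by
  simpa using pmvMatrix_map (Int.castRingHom S) AS AT M c

lemma pmvMatrix_mulVec_le_iff [PartialOrder R] [IsOrderedRing R]
    (AS : Matrix (Fin mS) (Fin q) R) (bS : Fin mS → R)
    (AT : Matrix (Fin mT) (Fin q) R) (bT : Fin mT → R) (M : Matrix (Fin k) (Fin q) R)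
    (c : Fin k → R) (n B : R) (x : Fin q → R) (o : Fin k → R) :
    pmvMatrix AS AT M c *ᵥ Sum.elim x o ≤ pmvBound bS bT n B ↔
      (∀ i, 0 ≤ x i) ∧ AS *ᵥ x ≤ bS ∧ ∑ i, x i = n ∧
        (∀ i, 0 ≤ o i) ∧ c ⬝ᵥ o ≤ B ∧ AT *ᵥ (x + o ᵥ* M) ≤ bT := by
  simp only [pmvMatrix, pmvBound, fromRows_mulVec, fromCols_mulVec_sumElim, Sum.elim_le_elim_iff,
    neg_mulVec, add_zero, zero_add, zero_mulVec]
  rw [← mulVec_mulVec, mulVec_transpose, ← mulVec_add, one_mulVec, one_mulVec,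
    replicateRow_mulVec_eq_const, replicateRow_mulVec_eq_const, one_dotProduct]
  refine and_congr (by simp [Pi.le_def]) (and_congr Iff.rfl (and_congr ?_
    (and_congr (by simp [Pi.le_def]) (and_congr (by simp [Pi.le_def]) Iff.rfl))))
  simp [Pi.le_def, le_antisymm_iff]

lemma pmvMatrix_map_intCast_mulVec_le_iff (AS : Matrix (Fin mS) (Fin q) ℤ) (bS : Fin mS → ℤ)
    (AT : Matrix (Fin mT) (Fin q) ℤ) (bT : Fin mT → ℤ) (M : Matrix (Fin k) (Fin q) ℤ)
    (c : Fin k → ℤ) (n : ℤ) (B : ℝ) (x : Fin q → ℤ) (o : Fin k → ℤ) :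
    (pmvMatrix AS AT M c).map Int.cast *ᵥ (Int.cast ∘ Sum.elim x o) ≤
        pmvBound (Int.cast ∘ bS) (Int.cast ∘ bT) (n : ℝ) B ↔
      (∀ i, 0 ≤ x i) ∧ AS *ᵥ x ≤ bS ∧ ∑ i, x i = n ∧
        (∀ i, 0 ≤ o i) ∧ ((c ⬝ᵥ o : ℤ) : ℝ) ≤ B ∧ AT *ᵥ (x + o ᵥ* M) ≤ bT := by
  have hT : (Int.cast ∘ x + (Int.cast ∘ o) ᵥ* M.map Int.cast : Fin q → ℝ) =
      Int.cast ∘ (x + o ᵥ* M) := by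
    ext j
    simpa using ((Int.castRingHom ℝ).map_vecMul M o j).symm
  rw [pmvMatrix_map_intCast, Sum.comp_elim, pmvMatrix_mulVec_le_iff, hT,
    Matrix.map_intCast_mulVec_le_iff, Matrix.map_intCast_mulVec_le_iff, ← Int.cast_dotProduct]
  simp only [Function.comp_apply, Int.cast_nonneg_iff]
  exact_mod_cast Iff.rfl

end PMV

theorem stmt10_general {q k mS mT : ℕ}
    (AS : Matrix (Fin mS) (Fin q) ℤ) (bS : Fin mS → ℤ)
    (AT : Matrix (Fin mT) (Fin q) ℤ) (bT : Fin mT → ℤ)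
    (M : Matrix (Fin k) (Fin q) ℤ)
    (c : Fin k → ℤ) :
    ∃ C' : ℝ, ∀ (n : ℕ) (B : ℝ), 0 ≤ B →
      -- S_{n,B} is nonempty:
      (∃ x : Fin q → ℤ, (∀ i, 0 ≤ x i) ∧ AS.mulVec x ≤ bS ∧ (∑ i, x i) = (n : ℤ) ∧
        ∃ o : Fin k → ℤ, (∀ i, 0 ≤ o i) ∧ ((c ⬝ᵥ o : ℤ) : ℝ) ≤ B ∧
          AT.mulVec (x + Matrix.vecMul o M) ≤ bT) →
      -- for every fractional solution x:
      ∀ x : Fin q → ℝ, (∀ i, 0 ≤ x i) →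
        (AS.map (Int.cast : ℤ → ℝ)).mulVec x ≤ (fun i => (bS i : ℝ)) →
        (∑ i, x i) = (n : ℝ) →
        (∃ o : Fin k → ℝ, (∀ i, 0 ≤ o i) ∧ (fun i => (c i : ℝ)) ⬝ᵥ o ≤ B ∧
          (AT.map (Int.cast : ℤ → ℝ)).mulVec (x + Matrix.vecMul o (M.map (Int.cast : ℤ → ℝ)))
            ≤ (fun i => (bT i : ℝ))) →
      -- there is a nearby integer solution x′ ∈ S_{n,B}:
      ∃ x' : Fin q → ℤ, (∀ i, 0 ≤ x' i) ∧ AS.mulVec x' ≤ bS ∧ (∑ i, x' i) = (n : ℤ) ∧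
        (∃ o : Fin k → ℤ, (∀ i, 0 ≤ o i) ∧ ((c ⬝ᵥ o : ℤ) : ℝ) ≤ B ∧
          AT.mulVec (x' + Matrix.vecMul o M) ≤ bT) ∧
        ‖x - (fun i => ((x' i : ℝ)))‖ < C' := by
  obtain ⟨C, hC⟩ := exists_int_near_polyhedron (pmvMatrix AS AT M c)
  refine ⟨C + 1, fun n B _ ⟨xs, hxs, hxsS, hxsn, os, hos, hosB, hosT⟩ x hx hxS hxn
    ⟨o, ho, hoB, hoT⟩ => ?_⟩
  set b := pmvBound (Int.cast ∘ bS) (Int.cast ∘ bT) ((n : ℤ) : ℝ) B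
  have hzs := (pmvMatrix_map_intCast_mulVec_le_iff AS bS AT bT M c n B xs os).2
    ⟨hxs, hxsS, hxsn, hos, hosB, hosT⟩
  have hxo : (pmvMatrix AS AT M c).map Int.cast *ᵥ Sum.elim x o ≤ b := by
    rw [pmvMatrix_map_intCast, pmvMatrix_mulVec_le_iff, Int.cast_natCast]
    exact ⟨hx, hxS, hxn, ho, hoB, hoT⟩
  obtain ⟨z, hz, hdist⟩ := hC b _ hzs _ hxo
  rw [← Sum.elim_comp_inl_inr z, pmvMatrix_map_intCast_mulVec_le_iff] at hz
  obtain ⟨hz₀, hzS, hzn, ho₀, hoB', hoT'⟩ := hz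
  refine ⟨z ∘ Sum.inl, hz₀, hzS, hzn, ⟨z ∘ Sum.inr, ho₀, hoB', hoT'⟩, ?_⟩
  have hproj : ‖x - Int.cast ∘ (z ∘ Sum.inl)‖ ≤ ‖Sum.elim x o - Int.cast ∘ z‖ :=
    (pi_norm_le_iff_of_nonneg (norm_nonneg _)).2 fun j =>
      norm_le_pi_norm (Sum.elim x o - Int.cast ∘ z) (Sum.inl j)
  exact hproj.trans_lt (by linarith)

/-- Integer rounding for the PMV-instability setting (integral data). If the set of
unstable integer histograms `S_{n,B}` is nonempty, then there is a constant `C′`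
(independent of `n` and `B`) such that every fractional point of `H_{B,n} ∩ ℝ_{≥0}^q`
is within sup-norm distance `< C′` of an integer point of `S_{n,B}`. -/
theorem stmt10 {q k mS mT : ℕ}
    (AS : Matrix (Fin mS) (Fin q) ℤ) (bS : Fin mS → ℤ)
    (AT : Matrix (Fin mT) (Fin q) ℤ) (bT : Fin mT → ℤ)
    (M : Matrix (Fin k) (Fin q) ℤ)
    (c : Fin k → ℤ) (hc : ∀ i, 0 < c i) :
    ∃ C' : ℝ, ∀ (n : ℕ) (B : ℝ), 0 ≤ B →
      -- S_{n,B} is nonempty: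
      (∃ x : Fin q → ℤ, (∀ i, 0 ≤ x i) ∧ AS.mulVec x ≤ bS ∧ (∑ i, x i) = (n : ℤ) ∧
        ∃ o : Fin k → ℤ, (∀ i, 0 ≤ o i) ∧ ((c ⬝ᵥ o : ℤ) : ℝ) ≤ B ∧
          AT.mulVec (x + Matrix.vecMul o M) ≤ bT) →
      -- for every fractional solution x:
      ∀ x : Fin q → ℝ, (∀ i, 0 ≤ x i) →
        (AS.map (Int.cast : ℤ → ℝ)).mulVec x ≤ (fun i => (bS i : ℝ)) →
        (∑ i, x i) = (n : ℝ) →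
        (∃ o : Fin k → ℝ, (∀ i, 0 ≤ o i) ∧ (fun i => (c i : ℝ)) ⬝ᵥ o ≤ B ∧
          (AT.map (Int.cast : ℤ → ℝ)).mulVec (x + Matrix.vecMul o (M.map (Int.cast : ℤ → ℝ)))
            ≤ (fun i => (bT i : ℝ))) →
      -- there is a nearby integer solution x′ ∈ S_{n,B}:
      ∃ x' : Fin q → ℤ, (∀ i, 0 ≤ x' i) ∧ AS.mulVec x' ≤ bS ∧ (∑ i, x' i) = (n : ℤ) ∧
        (∃ o : Fin k → ℤ, (∀ i, 0 ≤ o i) ∧ ((c ⬝ᵥ o : ℤ) : ℝ) ≤ B ∧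
          AT.mulVec (x' + Matrix.vecMul o M) ≤ bT) ∧
        ‖x - (fun i => ((x' i : ℝ)))‖ < C' :=
  stmt10_general AS bS AT bT M c
end

section
/- Consider the PMV-instability setting with polyhedral cones C_S° = {x : A_S x ≤ 0}, C_T° = {x : A_T x ≤ 0} in ℝ^q. Suppose dim(C_T°) = q and there is an interior point y of C_S° of the form y = x − oᵀM_O where x is an interior point of C_T° and o ≥ 0. Then d_∞ := dim(Cone_∞) = dim(C_S°), where Cone_∞ = {z ∈ C_S° : ∃ w ∈ ℝ_{≥0}^{|O|}, z + wᵀM_O ∈ C_T°}. -/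
/-!
Since `C_T°` is full-dimensional, `x` lies in its interior, so `U = int C_T° - oᵀM` is an open
neighbourhood of `y = x - oᵀM` whose points `z` satisfy `z + oᵀM ∈ C_T°`. Hence `Cone_∞` contains
`relint C_S° ∩ U`, a nonempty relatively open subset of `C_S°`, which already spans the affine
hull of `C_S°`; conversely `Cone_∞ ⊆ C_S°`.
-/

open Matrix

/-- The dimension of a set in `ℝ^q`: the dimension of (the direction of) its affine hull. -/
noncomputable def setDim {q : ℕ} (S : Set (Fin q → ℝ)) : ℕ :=
  Module.finrank ℝ (affineSpan ℝ S).direction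

open Set

section IntrinsicInterior

variable {V P : Type*} [NormedAddCommGroup V] [NormedSpace ℝ V] [MetricSpace P]
  [NormedAddTorsor V P]

theorem AffineSubspace.affineSpan_image_coe_of_isOpen {E : AffineSubspace ℝ P} [Nonempty E]
    {u : Set E} (hu : IsOpen u) (hne : u.Nonempty) : affineSpan ℝ ((↑) '' u : Set P) = E := by
  rw [← E.coe_subtype, ← AffineSubspace.map_span, hu.affineSpan_eq_top hne]
  ext p
  simp

theorem affineSpan_intrinsicInterior_inter_of_isOpen {s u : Set P} (hu : IsOpen u)
    (hne : (intrinsicInterior ℝ s ∩ u).Nonempty) :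
    affineSpan ℝ (intrinsicInterior ℝ s ∩ u) = affineSpan ℝ s := by
  rw [intrinsicInterior, ← image_inter_preimage] at hne ⊢
  obtain ⟨p, -⟩ := image_nonempty.mp hne
  have : Nonempty (affineSpan ℝ s) := ⟨p⟩
  exact AffineSubspace.affineSpan_image_coe_of_isOpen
    (isOpen_interior.inter (hu.preimage continuous_subtype_val)) (image_nonempty.mp hne)

end IntrinsicInterior

theorem intrinsicInterior_subset_interior_of_affineSpan_eq_top {𝕜 V P : Type*} [Ring 𝕜]
    [AddCommGroup V] [Module 𝕜 V] [TopologicalSpace P] [AddTorsor V P] {s : Set P}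
    (h : affineSpan 𝕜 s = ⊤) : intrinsicInterior 𝕜 s ⊆ interior s := by
  have hopen : IsOpen (affineSpan 𝕜 s : Set P) := by simp [h]
  exact (hopen.isOpenMap_subtype_val.image_interior_subset _).trans
    (interior_mono (image_preimage_subset _ _))

theorem affineSpan_eq_top_of_setDim_eq {q : ℕ} {s : Set (Fin q → ℝ)} (hs : s.Nonempty)
    (h : setDim s = q) : affineSpan ℝ s = ⊤ := by
  refine (AffineSubspace.direction_eq_top_iff_of_nonempty (hs.mono (subset_affineSpan ℝ s))).mp ?_
  exact Submodule.eq_top_of_finrank_eq (by rw [Module.finrank_fin_fun]; exact h)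

/-- In the PMV-instability setting, if `C_T° = {x : A_T x ≤ 0}` is full-dimensional and
some (relative) interior point `y` of `C_S° = {x : A_S x ≤ 0}` has the form
`y = x − oᵀM` with `x` a (relative) interior point of `C_T°` and `o ≥ 0`, then
`d_∞ = dim(Cone_∞) = dim(C_S°)`. -/
theorem stmt12 {q k mS mT : ℕ}
    (AS : Matrix (Fin mS) (Fin q) ℝ) (AT : Matrix (Fin mT) (Fin q) ℝ)
    (M : Matrix (Fin k) (Fin q) ℝ)
    (hdimT : setDim {x : Fin q → ℝ | AT.mulVec x ≤ 0} = q)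
    (x y : Fin q → ℝ) (o : Fin k → ℝ) (ho : ∀ i, 0 ≤ o i)
    (hx : x ∈ intrinsicInterior ℝ {z : Fin q → ℝ | AT.mulVec z ≤ 0})
    (hy : y ∈ intrinsicInterior ℝ {z : Fin q → ℝ | AS.mulVec z ≤ 0})
    (hxy : y = x - Matrix.vecMul o M) :
    setDim {z : Fin q → ℝ | AS.mulVec z ≤ 0 ∧
        ∃ w : Fin k → ℝ, (∀ i, 0 ≤ w i) ∧ AT.mulVec (z + Matrix.vecMul w M) ≤ 0}
      = setDim {z : Fin q → ℝ | AS.mulVec z ≤ 0} := by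
  set S : Set (Fin q → ℝ) := {z | AS.mulVec z ≤ 0}
  set T : Set (Fin q → ℝ) := {z | AT.mulVec z ≤ 0}
  set K : Set (Fin q → ℝ) := {z | AS.mulVec z ≤ 0 ∧
    ∃ w : Fin k → ℝ, (∀ i, 0 ≤ w i) ∧ AT.mulVec (z + vecMul w M) ≤ 0}
  suffices affineSpan ℝ K = affineSpan ℝ S by rw [setDim, setDim, this]
  have hspanT : affineSpan ℝ T = ⊤ := affineSpan_eq_top_of_setDim_eq ⟨0, by simp [T]⟩ hdimT
  have hxT : x ∈ interior T := intrinsicInterior_subset_interior_of_affineSpan_eq_top hspanT hx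
  have hshift : vecMul o M = x - y := by rw [hxy, sub_sub_cancel]
  set U : Set (Fin q → ℝ) := (· + vecMul o M) ⁻¹' interior T
  have hU : IsOpen U := isOpen_interior.preimage (continuous_add_const _)
  have hyU : y ∈ U := by simpa [U, hshift] using hxT
  refine le_antisymm (affineSpan_mono ℝ fun z hz => hz.1) ?_
  rw [← affineSpan_intrinsicInterior_inter_of_isOpen hU ⟨y, hy, hyU⟩]
  exact affineSpan_mono ℝ fun z ⟨hzS, hzU⟩ =>
    ⟨intrinsicInterior_subset hzS, o, ho, interior_subset hzU⟩
end

section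
/- Under the veto rule (positional scoring rule with scoring vector (1,…,1,0)) on m ≥ 3 alternatives, no coalition of voters who all prefer the current loser to the current winner can make the loser win by misreporting: for every profile P and every budget B ≥ 0, CML(veto, P, B) = 0. -/
/-!
Under veto every vote hands out exactly `m - 1` points, so the total score `n (m - 1)` does not
depend on the profile. A manipulator who prefers the loser `l` to the winner `w` does not veto `l`,
so no manipulation raises the score of `l`. If `l` won afterwards, its new score would be at least
the average and its old score, being minimal, at most the average; hence the old scores were all
equal, and the lexicographic tie-breaking would make `w = l`.
-/

/-- A vote over `m` alternatives is a linear order, encoded as a bijection sending each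
alternative to its position (`0` = most preferred, `m − 1` = last). The veto score of
alternative `a` in profile `P`: `a` gets one point from each vote that does not rank it
last. -/
def vetoScore {m n : ℕ} (P : Fin n → (Fin m ≃ Fin m)) (a : Fin m) : ℕ :=
  (Finset.univ.filter fun j => ((P j) a : ℕ) ≠ m - 1).card

open Finset

theorem card_filter_val_apply_ne_sub_one {m : ℕ} (σ : Fin m ≃ Fin m) :
    #{a | (σ a : ℕ) ≠ m - 1} = m - 1 := by
  rcases m with _ | k
  · rfl
  · have hlast : ∀ a, (σ a : ℕ) ≠ k + 1 - 1 ↔ a ≠ σ.symm (Fin.last k) := by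
      intro a
      simp [Equiv.eq_symm_apply, Fin.ext_iff]
    simp only [hlast, filter_ne', card_erase_of_mem (mem_univ _), card_univ, Fintype.card_fin]

theorem sum_vetoScore {m n : ℕ} (P : Fin n → (Fin m ≃ Fin m)) :
    ∑ a, vetoScore P a = n * (m - 1) := by
  simp only [vetoScore, card_filter]
  rw [sum_comm]
  simp only [← card_filter, card_filter_val_apply_ne_sub_one, sum_const, card_univ,
    Fintype.card_fin, smul_eq_mul]

theorem vetoScore_le_of_forall_ne_imp_lt {m n : ℕ} {P P' : Fin n → (Fin m ≃ Fin m)} {a b : Fin m}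
    (h : ∀ j, P' j ≠ P j → P j a < P j b) : vetoScore P' a ≤ vetoScore P a := by
  refine card_le_card fun j hj => ?_
  simp only [mem_filter, mem_univ, true_and] at hj ⊢
  by_cases hj' : P' j = P j
  · rwa [← hj']
  · have hab : ((P j) a : ℕ) < (P j) b := h j hj'
    have hb : ((P j) b : ℕ) < m := ((P j) b).isLt
    omega

theorem forall_eq_of_forall_le_of_sum_le_card_nsmul {ι M : Type*} [Fintype ι] [AddCommMonoid M]
    [PartialOrder M] [IsOrderedCancelAddMonoid M] {f : ι → M} {a : ι}
    (hmin : ∀ b, f a ≤ f b) (hsum : ∑ b, f b ≤ Fintype.card ι • f a) : ∀ b, f b = f a := by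
  have hconst : ∑ _b : ι, f a = ∑ b, f b :=
    le_antisymm (sum_le_sum fun b _ => hmin b) (by simpa using hsum)
  intro b
  exact ((sum_eq_sum_iff_of_le fun b _ => hmin b).1 hconst b (mem_univ b)).symm

theorem stmt16_general {m n : ℕ} (P : Fin n → (Fin m ≃ Fin m))
    (w l : Fin m)
    (hwlex : ∀ b, vetoScore P b = vetoScore P w → w ≤ b)
    (hlmin : ∀ b, vetoScore P l ≤ vetoScore P b)
    (hllex : ∀ b, vetoScore P b = vetoScore P l → l ≤ b)
    (hwl : w ≠ l)
    (P' : Fin n → (Fin m ≃ Fin m))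
    (hpref : ∀ j, P' j ≠ P j → (P j) l < (P j) w) :
    ¬ ((∀ b, vetoScore P' b ≤ vetoScore P' l) ∧
       (∀ b, vetoScore P' b = vetoScore P' l → l ≤ b)) := by
  rintro ⟨hmax', -⟩
  have hnotRaised : vetoScore P' l ≤ vetoScore P l := vetoScore_le_of_forall_ne_imp_lt hpref
  have hsum : ∑ b, vetoScore P b ≤ Fintype.card (Fin m) • vetoScore P l :=
    calc ∑ b, vetoScore P b = ∑ b, vetoScore P' b := by rw [sum_vetoScore, sum_vetoScore]
      _ ≤ #(univ : Finset (Fin m)) • vetoScore P' l := sum_le_card_nsmul _ _ _ fun b _ => hmax' b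
      _ ≤ Fintype.card (Fin m) • vetoScore P l := by rw [card_univ]; gcongr
  have htie := forall_eq_of_forall_le_of_sum_le_card_nsmul hlmin hsum w
  exact hwl (le_antisymm (hwlex l (htie.symm)) (hllex w htie))

/-- Under the veto rule with lexicographic tie-breaking (`w` is the winner: maximal
score, least index among maximizers; `l ≠ w` is the loser: minimal score, least index
among minimizers), no coalition of at most `B` voters each of whom prefers `l` to `w`
can make `l` the winner by misreporting: `CML(veto, P, B) = 0`. -/
theorem stmt16 {m n : ℕ} (hm : 3 ≤ m) (P : Fin n → (Fin m ≃ Fin m)) (B : ℕ)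
    (w l : Fin m)
    (hwmax : ∀ b, vetoScore P b ≤ vetoScore P w)
    (hwlex : ∀ b, vetoScore P b = vetoScore P w → w ≤ b)
    (hlmin : ∀ b, vetoScore P l ≤ vetoScore P b)
    (hllex : ∀ b, vetoScore P b = vetoScore P l → l ≤ b)
    (hwl : w ≠ l)
    (P' : Fin n → (Fin m ≃ Fin m))
    (hcard : (Finset.univ.filter fun j => P' j ≠ P j).card ≤ B)
    (hpref : ∀ j, P' j ≠ P j → (P j) l < (P j) w) :
    ¬ ((∀ b, vetoScore P' b ≤ vetoScore P' l) ∧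
       (∀ b, vetoScore P' b = vetoScore P' l → l ≤ b)) :=
  stmt16_general P w l hwlex hlmin hllex hwl P' hpref
end
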